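/- arXiv:2312.09586 — 3 statements merged into one kernel-verified Lean document; each statement's English description precedes it below -/
import Mathlib

section
/- Let Θ ⊆ ℝ^d be open and let g : Θ → ℝ^{d×d} be a differentiable map whose value g(θ) is a symmetric positive definite matrix for every θ, with inverse matrix entries g^{bc}(θ). Suppose there are functions Γ^{(0)}_{abc} : Θ → ℝ satisfying the dual structure identity ∂_a g_{bc}(θ) = Γ^{(0)}_{abc}(θ) + Γ^{(0)}_{acb}(θ) for all indices a, b, c and all θ ∈ Θ. Then the Jeffreys prior π_J(θ) = (det g(θ))^{1/2} satisfies ∂_a log π_J(θ) = Σ_{b,c} g^{bc}(θ) Γ^{(0)}_{abc}(θ) for all a and all θ ∈ Θ; that is, the Jeffreys prior is a 0-parallel prior. -/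
/-- Partial derivative of `f : ℝ^d → ℝ` along the `a`-th coordinate. -/
noncomputable def pder {d : ℕ} (a : Fin d) (f : (Fin d → ℝ) → ℝ) (θ : Fin d → ℝ) : ℝ :=
  fderiv ℝ f θ (Pi.single a 1)

/-!
Jacobi's formula `∂_a log det g = tr (g⁻¹ ∂_a g)` comes from differentiating `det` as a
multilinear function of the rows of `g` and expanding each modified row against the adjugate.
Substituting the dual structure identity `∂_a g_{bc} = Γ_{abc} + Γ_{acb}`, the symmetry of `g⁻¹`
makes both terms contribute `Σ g^{bc} Γ_{abc}`, which cancels the factor `1/2` from the square root.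
-/

namespace Matrix

variable {n : Type*} [Fintype n]

theorem IsSymm.sum_mul_add_swap {R : Type*} [CommSemiring R] {S : Matrix n n R} (hS : S.IsSymm)
    (T : n → n → R) :
    ∑ i, ∑ j, S j i * (T i j + T j i) = 2 * ∑ i, ∑ j, S i j * T i j := by
  simp only [mul_add, Finset.sum_add_distrib, two_mul]
  congr 1
  · exact Finset.sum_congr rfl fun i _ => Finset.sum_congr rfl fun j _ => by rw [hS.apply j i]
  · exact Finset.sum_comm

variable {𝕜 : Type*} [NontriviallyNormedField 𝕜] [DecidableEq n]

noncomputable def detContinuousMultilinearMap :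
    ContinuousMultilinearMap 𝕜 (fun _ : n => n → 𝕜) 𝕜 :=
  { (detRowAlternating : (n → 𝕜) [⋀^n]→ₗ[𝕜] 𝕜).toMultilinearMap with
    cont := continuous_id.matrix_det }

theorem det_updateRow_eq_sum_mul_adjugate (A : Matrix n n 𝕜) (i : n) (v : n → 𝕜) :
    (A.updateRow i v).det = ∑ j, v j * A.adjugate j i := by
  rw [← cramer_transpose_apply, cramer_eq_adjugate_mulVec, ← adjugate_transpose]
  simp [mulVec, dotProduct, mul_comm]

section Derivative

variable {E : Type*} [NormedAddCommGroup E] [NormedSpace 𝕜 E]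

theorem hasFDerivAt_det {M : E → Matrix n n 𝕜} {M' : n → n → E →L[𝕜] 𝕜} {x : E}
    (hM : ∀ i j, HasFDerivAt (fun y => M y i j) (M' i j) x) :
    HasFDerivAt (fun y => (M y).det) (∑ i, ∑ j, (M x).adjugate j i • M' i j) x := by
  have hrow (i : n) : HasFDerivAt (fun y => M y i) (ContinuousLinearMap.pi (M' i)) x :=
    hasFDerivAt_pi.2 (hM i)
  refine (HasFDerivAt.multilinear_comp (f := detContinuousMultilinearMap) hrow).congr_fderiv ?_
  ext v
  simp only [FunLike.coe_sum, Finset.sum_apply, ContinuousLinearMap.comp_apply,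
    ContinuousMultilinearMap.toContinuousLinearMap_apply]
  refine Finset.sum_congr rfl fun i _ => ?_
  exact (det_updateRow_eq_sum_mul_adjugate (M x) i _).trans (by simp [mul_comm])

end Derivative

section Real

open Real Filter Topology

variable {E : Type*} [NormedAddCommGroup E] [NormedSpace ℝ E]
  {M : E → Matrix n n ℝ} {M' : n → n → E →L[ℝ] ℝ} {x : E}

theorem hasFDerivAt_log_det (hM : ∀ i j, HasFDerivAt (fun y => M y i j) (M' i j) x)
    (hdet : (M x).det ≠ 0) :
    HasFDerivAt (fun y => log (M y).det) (∑ i, ∑ j, (M x)⁻¹ j i • M' i j) x := by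
  refine ((hasFDerivAt_det hM).log hdet).congr_fderiv ?_
  simp only [Finset.smul_sum, smul_smul, inv_def, smul_apply, Ring.inverse_eq_inv', smul_eq_mul]

theorem hasFDerivAt_log_sqrt_det (hM : ∀ i j, HasFDerivAt (fun y => M y i j) (M' i j) x)
    (hdet : 0 < (M x).det) :
    HasFDerivAt (fun y => log √(M y).det) ((2 : ℝ)⁻¹ • ∑ i, ∑ j, (M x)⁻¹ j i • M' i j) x := by
  have hpos : ∀ᶠ y in 𝓝 x, 0 < (M y).det :=
    (hasFDerivAt_det hM).continuousAt.eventually (lt_mem_nhds hdet)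
  have hev : (fun y => log √(M y).det) =ᶠ[𝓝 x] fun y => (2 : ℝ)⁻¹ • log (M y).det := by
    filter_upwards [hpos] with y hy
    rw [log_sqrt hy.le, smul_eq_mul, div_eq_inv_mul]
  exact ((hasFDerivAt_log_det hM hdet.ne').const_smul (2 : ℝ)⁻¹).congr_of_eventuallyEq hev

end Real

end Matrix

theorem stmt_4_general {d : ℕ} (Θ : Set (Fin d → ℝ))
    (g : (Fin d → ℝ) → Matrix (Fin d) (Fin d) ℝ)
    (hg_diff : ∀ b c : Fin d, ∀ θ ∈ Θ, DifferentiableAt ℝ (fun θ' => g θ' b c) θ)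
    (hg_symm : ∀ θ ∈ Θ, (g θ).IsSymm)
    (hg_pd : ∀ θ ∈ Θ, (g θ).PosDef)
    (Γ0 : (Fin d → ℝ) → Fin d → Fin d → Fin d → ℝ)
    (h_dual : ∀ θ ∈ Θ, ∀ a b c : Fin d,
      pder a (fun θ' => g θ' b c) θ = Γ0 θ a b c + Γ0 θ a c b) :
    ∀ θ ∈ Θ, ∀ a : Fin d,
      pder a (fun θ' => Real.log (Real.sqrt (g θ').det)) θ =
        ∑ b : Fin d, ∑ c : Fin d, (g θ)⁻¹ b c * Γ0 θ a b c := by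
  intro θ hθ a
  have hg : ∀ b c, HasFDerivAt (fun θ' => g θ' b c) (fderiv ℝ (fun θ' => g θ' b c) θ) θ :=
    fun b c => (hg_diff b c θ hθ).hasFDerivAt
  rw [pder, (Matrix.hasFDerivAt_log_sqrt_det hg (hg_pd θ hθ).det_pos).fderiv]
  have hΓ : ∀ b c, fderiv ℝ (fun θ' => g θ' b c) θ (Pi.single a 1) = Γ0 θ a b c + Γ0 θ a c b :=
    h_dual θ hθ a
  simp only [_root_.smul_apply, FunLike.coe_sum, Finset.sum_apply, smul_eq_mul, hΓ]
  rw [(hg_symm θ hθ).inv.sum_mul_add_swap, inv_mul_cancel_left₀ two_ne_zero]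

/-- If `Γ^{(0)}` satisfies the dual (self-dual) structure identity
`∂_a g_{bc} = Γ^{(0)}_{abc} + Γ^{(0)}_{acb}`, then the Jeffreys prior
`π_J = (det g)^{1/2}` is a 0-parallel prior:
`∂_a log π_J = Σ_{b,c} g^{bc} Γ^{(0)}_{abc}`. -/
theorem stmt_4 {d : ℕ} (Θ : Set (Fin d → ℝ)) (hΘ_open : IsOpen Θ)
    (g : (Fin d → ℝ) → Matrix (Fin d) (Fin d) ℝ)
    (hg_diff : ∀ b c : Fin d, ∀ θ ∈ Θ, DifferentiableAt ℝ (fun θ' => g θ' b c) θ)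
    (hg_symm : ∀ θ ∈ Θ, (g θ).IsSymm)
    (hg_pd : ∀ θ ∈ Θ, (g θ).PosDef)
    (Γ0 : (Fin d → ℝ) → Fin d → Fin d → Fin d → ℝ)
    (h_dual : ∀ θ ∈ Θ, ∀ a b c : Fin d,
      pder a (fun θ' => g θ' b c) θ = Γ0 θ a b c + Γ0 θ a c b) :
    ∀ θ ∈ Θ, ∀ a : Fin d,
      pder a (fun θ' => Real.log (Real.sqrt (g θ').det)) θ =
        ∑ b : Fin d, ∑ c : Fin d, (g θ)⁻¹ b c * Γ0 θ a b c :=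
  stmt_4_general Θ g hg_diff hg_symm hg_pd Γ0 h_dual
end

section
/- Let Θ ⊆ ℝ^d be open, α ∈ ℝ, and let g : Θ → ℝ^{d×d} take symmetric positive definite values with inverse entries g^{cd}(θ). Suppose functions T_{abc} : Θ → ℝ and e-connection coefficients Γ^{(e)}_{abc} : Θ → ℝ satisfy the α-affine relation Γ^{(e)}_{abc}(θ) = −((1−α)/2) T_{abc}(θ) for all indices and all θ, and set T_a(θ) := Σ_{b,c} g^{bc}(θ) T_{abc}(θ). Let π_J, π_e, π_m, π_MAP : Θ → (0, ∞) be differentiable with ∂_a log π_m(θ) − ∂_a log π_e(θ) = T_a(θ) for all a and θ (π_e and π_m are the e- and m-parallel priors). Define, for a constant C > 0, π_PM(θ) := C · π_MAP(θ) · π_J(θ) · (π_e(θ)/π_m(θ))^{(1−α)/4}. Then the pair (π_PM, π_MAP) satisfies the exact matching equation: for all a and all θ ∈ Θ, ∂_a log(π_PM(θ)/π_MAP(θ)) − ∂_a log π_J(θ) − (1/2) Σ_{c,d} g^{cd}(θ) Γ^{(e)}_{cda}(θ) = 0. -/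
open Filter Topology

/-
On `Θ` the logarithm of `π_PM / π_MAP` equals
`log π_J + ((1-α)/4) (log π_e - log π_m) + log C`, so its partial derivative is
`∂_a log π_J - ((1-α)/4) T_a`. In an α-affine coordinate the total symmetry of `T`
turns the trace `g^{cd} Γ^{(e)}_{cda}` into `-((1-α)/2) T_a`, and the two contributions cancel.
-/

section PartialDerivative

variable {d : ℕ} (a : Fin d) {f h : (Fin d → ℝ) → ℝ} {θ : Fin d → ℝ}

theorem pder_congr_of_eventuallyEq (hfh : f =ᶠ[𝓝 θ] h) : pder a f θ = pder a h θ := by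
  rw [pder, pder, hfh.fderiv_eq]

theorem pder_add (hf : DifferentiableAt ℝ f θ) (hh : DifferentiableAt ℝ h θ) :
    pder a (fun x => f x + h x) θ = pder a f θ + pder a h θ := by
  simp only [pder, fderiv_fun_add hf hh, add_apply]

theorem pder_sub (hf : DifferentiableAt ℝ f θ) (hh : DifferentiableAt ℝ h θ) :
    pder a (fun x => f x - h x) θ = pder a f θ - pder a h θ := by
  simp only [pder, fderiv_fun_sub hf hh, sub_apply]

theorem pder_const_mul (hf : DifferentiableAt ℝ f θ) (r : ℝ) :
    pder a (fun x => r * f x) θ = r * pder a f θ := by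
  simp only [pder, fderiv_const_mul hf r, FunLike.coe_smul, Pi.smul_apply, smul_eq_mul]

theorem pder_add_const (c : ℝ) : pder a (fun x => f x + c) θ = pder a f θ := by
  simp only [pder, fderiv_add_const]

end PartialDerivative

theorem log_mul_mul_mul_rpow_div_self {C M J e m r : ℝ} (hC : 0 < C) (hM : 0 < M) (hJ : 0 < J)
    (he : 0 < e) (hm : 0 < m) :
    Real.log (C * M * J * (e / m) ^ r / M) =
      Real.log J + r * (Real.log e - Real.log m) + Real.log C := by
  rw [show C * M * J * (e / m) ^ r / M = C * J * (e / m) ^ r by field_simp,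
    Real.log_mul (by positivity) (by positivity), Real.log_mul hC.ne' hJ.ne',
    Real.log_rpow (div_pos he hm), Real.log_div he.ne' hm.ne']
  ring

theorem sum_sum_mul_of_affine_of_symm {d : ℕ} (α : ℝ) (G : Matrix (Fin d) (Fin d) ℝ)
    (T Γ : Fin d → Fin d → Fin d → ℝ)
    (hT₁ : ∀ a b c, T a b c = T b a c) (hT₂ : ∀ a b c, T a b c = T a c b)
    (h_affine : ∀ a b c, Γ a b c = -((1 - α) / 2) * T a b c) (a : Fin d) :
    ∑ c, ∑ e, G c e * Γ c e a = -((1 - α) / 2) * ∑ b, ∑ c, G b c * T a b c := by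
  simp only [Finset.mul_sum, h_affine, hT₂ _ _ a, hT₁ _ a]
  exact Finset.sum_congr rfl fun _ _ => Finset.sum_congr rfl fun _ _ => by ring

theorem stmt_6_general {d : ℕ} (Θ : Set (Fin d → ℝ)) (hΘ_open : IsOpen Θ) (α : ℝ)
    (g : (Fin d → ℝ) → Matrix (Fin d) (Fin d) ℝ)
    (T Γe : (Fin d → ℝ) → Fin d → Fin d → Fin d → ℝ)
    -- the skewness tensor is fully symmetric in its indices:
    (hT_symm₁ : ∀ θ ∈ Θ, ∀ a b c : Fin d, T θ a b c = T θ b a c)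
    (hT_symm₂ : ∀ θ ∈ Θ, ∀ a b c : Fin d, T θ a b c = T θ a c b)
    -- the α-affine relation:
    (h_affine : ∀ θ ∈ Θ, ∀ a b c : Fin d, Γe θ a b c = -((1 - α) / 2) * T θ a b c)
    (Ta : (Fin d → ℝ) → Fin d → ℝ)
    (hTa : ∀ θ ∈ Θ, ∀ a : Fin d, Ta θ a = ∑ b : Fin d, ∑ c : Fin d, (g θ)⁻¹ b c * T θ a b c)
    (πJ πe πm πMAP : (Fin d → ℝ) → ℝ)
    (hπJ_pos : ∀ θ ∈ Θ, 0 < πJ θ) (hπe_pos : ∀ θ ∈ Θ, 0 < πe θ)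
    (hπm_pos : ∀ θ ∈ Θ, 0 < πm θ) (hπMAP_pos : ∀ θ ∈ Θ, 0 < πMAP θ)
    (hπJ_diff : ∀ θ ∈ Θ, DifferentiableAt ℝ πJ θ)
    (hπe_diff : ∀ θ ∈ Θ, DifferentiableAt ℝ πe θ)
    (hπm_diff : ∀ θ ∈ Θ, DifferentiableAt ℝ πm θ)
    -- π_e and π_m are the e- and m-parallel priors: ∂_a log(π_m/π_e) = T_a
    (h_em : ∀ θ ∈ Θ, ∀ a : Fin d,
      pder a (fun θ' => Real.log (πm θ')) θ - pder a (fun θ' => Real.log (πe θ')) θ = Ta θ a)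
    (C : ℝ) (hC : 0 < C)
    (πPM : (Fin d → ℝ) → ℝ)
    (hπPM : ∀ θ, πPM θ = C * πMAP θ * πJ θ * (πe θ / πm θ) ^ ((1 - α) / 4)) :
    ∀ θ ∈ Θ, ∀ a : Fin d,
      pder a (fun θ' => Real.log (πPM θ' / πMAP θ')) θ -
        pder a (fun θ' => Real.log (πJ θ')) θ -
        (1 / 2) * ∑ c : Fin d, ∑ e : Fin d, (g θ)⁻¹ c e * Γe θ c e a = 0 := by
  intro θ hθ a
  have hJ := (hπJ_diff θ hθ).log (hπJ_pos θ hθ).ne'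
  have he := (hπe_diff θ hθ).log (hπe_pos θ hθ).ne'
  have hm := (hπm_diff θ hθ).log (hπm_pos θ hθ).ne'
  have h_log_ratio : (fun x => Real.log (πPM x / πMAP x)) =ᶠ[𝓝 θ] fun x =>
      Real.log (πJ x) + (1 - α) / 4 * (Real.log (πe x) - Real.log (πm x)) + Real.log C := by
    filter_upwards [hΘ_open.mem_nhds hθ] with x hx
    rw [hπPM, log_mul_mul_mul_rpow_div_self hC (hπMAP_pos x hx) (hπJ_pos x hx) (hπe_pos x hx)
      (hπm_pos x hx)]
  have h_trace := sum_sum_mul_of_affine_of_symm α (g θ)⁻¹ (T θ) (Γe θ) (hT_symm₁ θ hθ) (hT_symm₂ θ hθ)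
    (h_affine θ hθ) a
  have hem : DifferentiableAt ℝ (fun x => Real.log (πe x) - Real.log (πm x)) θ := he.sub hm
  rw [pder_congr_of_eventuallyEq a h_log_ratio, pder_add_const,
    pder_add a hJ (hem.const_mul _), pder_const_mul a hem, pder_sub a he hm,
    h_trace, ← hTa θ hθ a, ← h_em θ hθ a]
  ring

/-- In an α-affine coordinate (`Γ^{(e)}_{abc} = −((1−α)/2) T_{abc}`), the pair
`(π_PM, π_MAP)` with `π_PM = C · π_MAP · π_J · (π_e/π_m)^{(1−α)/4}` satisfies the
exact matching equation
`∂_a log(π_PM/π_MAP) − ∂_a log π_J − (1/2) Σ_{c,d} g^{cd} Γ^{(e)}_{cda} = 0`. -/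
theorem stmt_6 {d : ℕ} (Θ : Set (Fin d → ℝ)) (hΘ_open : IsOpen Θ) (α : ℝ)
    (g : (Fin d → ℝ) → Matrix (Fin d) (Fin d) ℝ)
    (hg_symm : ∀ θ ∈ Θ, (g θ).IsSymm)
    (hg_pd : ∀ θ ∈ Θ, (g θ).PosDef)
    (T Γe : (Fin d → ℝ) → Fin d → Fin d → Fin d → ℝ)
    -- the skewness tensor is fully symmetric in its indices:
    (hT_symm₁ : ∀ θ ∈ Θ, ∀ a b c : Fin d, T θ a b c = T θ b a c)
    (hT_symm₂ : ∀ θ ∈ Θ, ∀ a b c : Fin d, T θ a b c = T θ a c b)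
    -- the α-affine relation:
    (h_affine : ∀ θ ∈ Θ, ∀ a b c : Fin d, Γe θ a b c = -((1 - α) / 2) * T θ a b c)
    (Ta : (Fin d → ℝ) → Fin d → ℝ)
    (hTa : ∀ θ ∈ Θ, ∀ a : Fin d, Ta θ a = ∑ b : Fin d, ∑ c : Fin d, (g θ)⁻¹ b c * T θ a b c)
    (πJ πe πm πMAP : (Fin d → ℝ) → ℝ)
    (hπJ_pos : ∀ θ ∈ Θ, 0 < πJ θ) (hπe_pos : ∀ θ ∈ Θ, 0 < πe θ)
    (hπm_pos : ∀ θ ∈ Θ, 0 < πm θ) (hπMAP_pos : ∀ θ ∈ Θ, 0 < πMAP θ)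
    (hπJ_diff : ∀ θ ∈ Θ, DifferentiableAt ℝ πJ θ)
    (hπe_diff : ∀ θ ∈ Θ, DifferentiableAt ℝ πe θ)
    (hπm_diff : ∀ θ ∈ Θ, DifferentiableAt ℝ πm θ)
    (hπMAP_diff : ∀ θ ∈ Θ, DifferentiableAt ℝ πMAP θ)
    -- π_e and π_m are the e- and m-parallel priors: ∂_a log(π_m/π_e) = T_a
    (h_em : ∀ θ ∈ Θ, ∀ a : Fin d,
      pder a (fun θ' => Real.log (πm θ')) θ - pder a (fun θ' => Real.log (πe θ')) θ = Ta θ a)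
    (C : ℝ) (hC : 0 < C)
    (πPM : (Fin d → ℝ) → ℝ)
    (hπPM : ∀ θ, πPM θ = C * πMAP θ * πJ θ * (πe θ / πm θ) ^ ((1 - α) / 4)) :
    ∀ θ ∈ Θ, ∀ a : Fin d,
      pder a (fun θ' => Real.log (πPM θ' / πMAP θ')) θ -
        pder a (fun θ' => Real.log (πJ θ')) θ -
        (1 / 2) * ∑ c : Fin d, ∑ e : Fin d, (g θ)⁻¹ c e * Γe θ c e a = 0 :=
  stmt_6_general Θ hΘ_open α g T Γe hT_symm₁ hT_symm₂ h_affine Ta hTa πJ πe πm πMAP hπJ_pos hπe_pos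
    hπm_pos hπMAP_pos hπJ_diff hπe_diff hπm_diff h_em C hC πPM hπPM
end

section
/- Let Θ ⊆ ℝ^d be open and convex, α ∈ ℝ, and let T_a : Θ → ℝ (a = 1, …, d) be continuously differentiable functions satisfying the statistical equi-affinity condition ∂_b T_a(θ) = ∂_a T_b(θ) for all θ ∈ Θ and 1 ≤ a < b ≤ d. Let π_MAP, π_J : Θ → (0, ∞) be continuously differentiable. Then there exists a differentiable function π_PM : Θ → (0, ∞) such that ∂_a log(π_PM(θ)/(π_MAP(θ) π_J(θ))) = −((1−α)/4) T_a(θ) for all a = 1, …, d and all θ ∈ Θ; in particular, a matching prior pair (π_PM, π_MAP) exists. -/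
open Finset

section CoordForm

variable {ι : Type*} [Fintype ι]

theorem ContinuousLinearMap.apply_eq_sum_smul_single [DecidableEq ι] {M : Type*}
    [AddCommMonoid M] [Module ℝ M] [TopologicalSpace M] (f : (ι → ℝ) →L[ℝ] M) (v : ι → ℝ) :
    f v = ∑ b, v b • f (Pi.single b 1) := by
  conv_lhs => rw [pi_eq_sum_univ' v]
  simp only [map_sum, map_smul]

noncomputable def coordForm (T : ι → (ι → ℝ) → ℝ) (θ : ι → ℝ) : (ι → ℝ) →L[ℝ] ℝ :=
  ∑ b, T b θ • ContinuousLinearMap.proj b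

variable {T : ι → (ι → ℝ) → ℝ} {θ : ι → ℝ}

@[simp]
theorem coordForm_apply (v : ι → ℝ) : coordForm T θ v = ∑ b, T b θ * v b := by
  simp [coordForm]

theorem coordForm_apply_single [DecidableEq ι] (a : ι) :
    coordForm T θ (Pi.single a 1) = T a θ := by
  simp [Pi.single_apply]

theorem hasFDerivAt_coordForm (hT : ∀ b, DifferentiableAt ℝ (T b) θ) :
    HasFDerivAt (coordForm T)
      (∑ b, (fderiv ℝ (T b) θ).smulRight (ContinuousLinearMap.proj b : (ι → ℝ) →L[ℝ] ℝ)) θ := by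
  unfold coordForm
  exact HasFDerivAt.fun_sum fun b _ => (hT b).hasFDerivAt.smul_const
    (ContinuousLinearMap.proj b : (ι → ℝ) →L[ℝ] ℝ)

theorem fderiv_coordForm_symm [DecidableEq ι]
    (hT : ∀ b, DifferentiableAt ℝ (T b) θ)
    (hsymm : ∀ a b, fderiv ℝ (T a) θ (Pi.single b 1) = fderiv ℝ (T b) θ (Pi.single a 1))
    (x y : ι → ℝ) : fderiv ℝ (coordForm T) θ x y = fderiv ℝ (coordForm T) θ y x := by
  simp only [(hasFDerivAt_coordForm hT).fderiv, _root_.sum_apply,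
    ContinuousLinearMap.smulRight_apply, smul_apply, ContinuousLinearMap.proj_apply, smul_eq_mul,
    ContinuousLinearMap.apply_eq_sum_smul_single (fderiv ℝ (T _) θ) x,
    ContinuousLinearMap.apply_eq_sum_smul_single (fderiv ℝ (T _) θ) y, sum_mul]
  rw [sum_comm]
  refine sum_congr rfl fun a _ => sum_congr rfl fun b _ => ?_
  rw [hsymm]
  ring

theorem Convex.exists_hasFDerivAt_coordForm [DecidableEq ι] {Θ : Set (ι → ℝ)}
    (hΘ : Convex ℝ Θ) (hΘo : IsOpen Θ)
    (hT : ∀ b, DifferentiableOn ℝ (T b) Θ)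
    (hsymm : ∀ θ ∈ Θ, ∀ a b,
      fderiv ℝ (T a) θ (Pi.single b 1) = fderiv ℝ (T b) θ (Pi.single a 1)) :
    ∃ F : (ι → ℝ) → ℝ, ∀ θ ∈ Θ, HasFDerivAt F (coordForm T θ) θ := by
  have hTat : ∀ θ ∈ Θ, ∀ b, DifferentiableAt ℝ (T b) θ := fun θ hθ b =>
    (hT b).differentiableAt (hΘo.mem_nhds hθ)
  refine hΘ.exists_forall_hasFDerivAt_of_fderiv_symmetric hΘo
    (fun θ hθ => (hasFDerivAt_coordForm (hTat θ hθ)).differentiableAt.differentiableWithinAt)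
    fun θ hθ => fderiv_coordForm_symm (hTat θ hθ) (hsymm θ hθ)

end CoordForm

/-- Under the statistical equi-affinity condition `∂_b T_a = ∂_a T_b`, a matching prior
pair exists: for any positive `π_MAP`, `π_J`, there is a positive differentiable `π_PM`
with `∂_a log(π_PM/(π_MAP π_J)) = −((1−α)/4) T_a` on `Θ`. -/
theorem stmt_7 {d : ℕ} (Θ : Set (Fin d → ℝ)) (hΘ_open : IsOpen Θ) (hΘ_conv : Convex ℝ Θ)
    (α : ℝ) (T : Fin d → (Fin d → ℝ) → ℝ)
    (hT_smooth : ∀ a : Fin d, ContDiffOn ℝ 1 (T a) Θ)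
    (h_equi : ∀ θ ∈ Θ, ∀ a b : Fin d, a < b → pder b (T a) θ = pder a (T b) θ)
    (πMAP πJ : (Fin d → ℝ) → ℝ)
    (hMAP_pos : ∀ θ ∈ Θ, 0 < πMAP θ) (hJ_pos : ∀ θ ∈ Θ, 0 < πJ θ)
    (hMAP_smooth : ContDiffOn ℝ 1 πMAP Θ) (hJ_smooth : ContDiffOn ℝ 1 πJ Θ) :
    ∃ πPM : (Fin d → ℝ) → ℝ,
      (∀ θ ∈ Θ, 0 < πPM θ) ∧
      (∀ θ ∈ Θ, DifferentiableAt ℝ πPM θ) ∧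
      ∀ θ ∈ Θ, ∀ a : Fin d,
        pder a (fun θ' => Real.log (πPM θ' / (πMAP θ' * πJ θ'))) θ =
          -((1 - α) / 4) * T a θ := by
  have hsymm : ∀ θ ∈ Θ, ∀ a b : Fin d, pder b (T a) θ = pder a (T b) θ := by
    intro θ hθ a b
    rcases lt_trichotomy a b with h | rfl | h
    exacts [h_equi θ hθ a b h, rfl, (h_equi θ hθ b a h).symm]
  obtain ⟨F, hF⟩ := hΘ_conv.exists_hasFDerivAt_coordForm hΘ_open
    (fun a => (hT_smooth a).differentiableOn one_ne_zero) hsymm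
  set c := -((1 - α) / 4)
  have hdiff {f : (Fin d → ℝ) → ℝ} (hf : ContDiffOn ℝ 1 f Θ) {θ} (hθ : θ ∈ Θ) :
      DifferentiableAt ℝ f θ :=
    (hf.differentiableOn one_ne_zero).differentiableAt (hΘ_open.mem_nhds hθ)
  refine ⟨fun θ => πMAP θ * πJ θ * Real.exp (c * F θ), fun θ hθ => ?_, fun θ hθ => ?_,
    fun θ hθ a => ?_⟩
  · have := hMAP_pos θ hθ; have := hJ_pos θ hθ; positivity
  · exact ((hdiff hMAP_smooth hθ).mul (hdiff hJ_smooth hθ)).mul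
      ((hF θ hθ).differentiableAt.const_mul c).exp
  · have hlog : (fun θ' => Real.log (πMAP θ' * πJ θ' * Real.exp (c * F θ') / (πMAP θ' * πJ θ')))
        =ᶠ[nhds θ] fun θ' => c * F θ' := by
      filter_upwards [hΘ_open.mem_nhds hθ] with θ' hθ'
      have := hMAP_pos θ' hθ'; have := hJ_pos θ' hθ'
      rw [mul_div_cancel_left₀ _ (by positivity), Real.log_exp]
    rw [pder, hlog.fderiv_eq, ((hF θ hθ).const_mul c).fderiv, smul_apply,
      coordForm_apply_single, smul_eq_mul]
end
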